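/- arXiv:2408.14775 — 4 statements merged into one kernel-verified Lean document; each statement's English description precedes it below -/
import Mathlib

section
/- Let L be a finitely generated free ℤ-module with a symmetric bilinear form B : L × L → ℤ, let P ⊆ L be a submodule, let W ∈ L, and let C₁ be a positive integer. Suppose there exists A ∈ P of divisibility 1 with B(A, W) = C₁, and there exists ω ∈ P with B(ω, W) = 0 and B(ω, ω) > 0. Then for every integer N there exists D ∈ P of divisibility 1 with B(D, W) = C₁ and B(D, D) > N. -/
private lemma stmt_2_aux (N a b q C₁ t k : ℤ) (hC1' : 0 < C₁) (hq1' : 0 < q)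
    (ht : t = |N| + |a| + 2 * C₁ * |b| + 1) (hk : k = C₁ * t) :
    N < a + 2 * k * b + k * k * q := by
  have hC1 : 1 ≤ C₁ := hC1'
  have hq1 : 1 ≤ q := hq1'
  have h1 : N ≤ |N| := le_abs_self N
  have h2 : -|a| ≤ a := neg_abs_le a
  have h3 : -|b| ≤ b := neg_abs_le b
  have h4 : (0:ℤ) ≤ |N| := abs_nonneg N
  have h5 : (0:ℤ) ≤ |a| := abs_nonneg a
  have h6 : (0:ℤ) ≤ |b| := abs_nonneg b
  have ht1 : 1 ≤ t := by nlinarith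
  have htk : t ≤ k := by nlinarith
  have hk0 : 1 ≤ k := le_trans ht1 htk
  have e1 : -(2*k*|b|) ≤ 2*k*b := by nlinarith
  have e2 : k*k ≤ k*k*q := by nlinarith
  have e3 : k*t ≤ k*k := by nlinarith
  have e4 : |N| + |a| + 2*k*|b| + 1 ≤ k*t := by
    have g1 : 0 ≤ (k-1)*|N| := mul_nonneg (by linarith) h4
    have g2 : 0 ≤ (k-1)*|a| := mul_nonneg (by linarith) h5
    have g3 : 0 ≤ (C₁-1)*(2*k*|b|) := mul_nonneg (by linarith) (by positivity)
    have g4 : k*t = k*|N| + k*|a| + k*(2*C₁*|b|) + k := by rw [ht]; ring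
    nlinarith
  linarith

/-- Lattice-theoretic content of Proposition 2.2: in a lattice `(L, B)`, given a
submodule `P`, a class `A ∈ P` of divisibility 1 pairing to `C₁ > 0` with `W`, and a
class `ω ∈ P` orthogonal to `W` of positive square, for every `N` there is a class
`D ∈ P` of divisibility 1 with `B(D, W) = C₁` and `B(D, D) > N`. -/
theorem stmt_2 {L : Type*} [AddCommGroup L] [Module ℤ L]
    [Module.Free ℤ L] [Module.Finite ℤ L]
    (B : L →ₗ[ℤ] L →ₗ[ℤ] ℤ) (hBsymm : ∀ x y, B x y = B y x)
    (P : Submodule ℤ L) (W : L) (C₁ : ℤ) (hC₁ : 0 < C₁)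
    (A : L) (hA : A ∈ P) (hAdiv : ∃ μ, B A μ = 1) (hAW : B A W = C₁)
    (ω : L) (hω : ω ∈ P) (hωW : B ω W = 0) (hωω : 0 < B ω ω) :
    ∀ N : ℤ, ∃ D ∈ P, (∃ x, B D x = 1) ∧ B D W = C₁ ∧ N < B D D := by
  intro N
  obtain ⟨μ, hμ⟩ := hAdiv
  set c : ℤ := B ω μ with hc
  set a : ℤ := B A A with ha
  set b : ℤ := B A ω with hb
  set q : ℤ := B ω ω with hq
  set t : ℤ := |N| + |a| + 2 * C₁ * |b| + 1 with ht
  have ht1 : 1 ≤ t := by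
    have := abs_nonneg N
    have := abs_nonneg a
    have := abs_nonneg b
    nlinarith
  set k : ℤ := C₁ * t with hk
  set D : L := A + k • ω with hD
  have hBD : ∀ x, B D x = B A x + k * B ω x := by
    intro x
    simp [hD, mul_comm]
  have hDW : B D W = C₁ := by rw [hBD, hAW, hωW]; ring
  refine ⟨D, P.add_mem hA (P.toAddSubgroup.zsmul_mem hω k), ?_, hDW, ?_⟩
  · -- divisibility 1
    have hcop : IsCoprime C₁ (1 + k * c) := by
      have h1 : IsCoprime C₁ (1 : ℤ) := isCoprime_one_right
      have h2 := h1.add_mul_left_right (t * c)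
      have heq : 1 + C₁ * (t * c) = 1 + k * c := by rw [hk]; ring
      rwa [heq] at h2
    obtain ⟨u, v, huv⟩ := hcop
    refine ⟨u • W + v • μ, ?_⟩
    have h2 : B D μ = 1 + k * c := by rw [hBD, hμ, hc]
    calc B D (u • W + v • μ) = u * B D W + v * B D μ := by simp [mul_comm]
    _ = u * C₁ + v * (1 + k * c) := by rw [hDW, h2]
    _ = 1 := huv
  · have hBA : B ω A = b := by rw [hb, hBsymm]
    have hDD : B D D = a + 2 * k * b + k * k * q := by
      rw [hBD, hD]
      simp only [map_add, map_smul, map_zsmul, smul_eq_mul, zsmul_eq_mul]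
      rw [← ha, ← hb, hBA, ← hq]
      ring
    rw [hDD]
    exact stmt_2_aux N a b q C₁ t k hC₁ hωω ht hk
end

section
/- Let L be a finitely generated free ℤ-module with a symmetric bilinear form B : L × L → ℤ. Let A, ω, μ, ν ∈ L satisfy B(A, μ) = 1, B(ω, μ) ≠ 0, B(A, ν) = 0, and B(ω, ν) ≠ 0. Then there exist infinitely many positive integers t such that A + t·ω has divisibility 1, i.e. such that there exists x ∈ L with B(A + t·ω, x) = 1. -/
/-- Key step in the proof of Proposition 2.2 (via Dirichlet's theorem): given
`A, ω, μ, ν` in a lattice with `B(A, μ) = 1`, `B(ω, μ) ≠ 0`, `B(A, ν) = 0`,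
`B(ω, ν) ≠ 0`, there are infinitely many positive integers `t` such that
`A + t·ω` has divisibility 1. -/
theorem stmt_3 {L : Type*} [AddCommGroup L] [Module ℤ L]
    [Module.Free ℤ L] [Module.Finite ℤ L]
    (B : L →ₗ[ℤ] L →ₗ[ℤ] ℤ) (hBsymm : ∀ x y, B x y = B y x)
    (A ω μ ν : L)
    (hAμ : B A μ = 1) (hωμ : B ω μ ≠ 0)
    (hAν : B A ν = 0) (hων : B ω ν ≠ 0) :
    {t : ℤ | 0 < t ∧ ∃ x, B (A + t • ω) x = 1}.Infinite := by
  set b := B ω μ with hb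
  set c := B ω ν with hc
  have hc2 : (0:ℤ) < c ^ 2 := by positivity
  apply Set.infinite_of_injective_forall_mem (f := fun n : ℕ => c ^ 2 * ((n : ℤ) + 1))

  · intro m n h
    simp only at h
    have := mul_left_cancel₀ (ne_of_gt hc2) h
    omega
  · intro n
    set t : ℤ := c ^ 2 * ((n : ℤ) + 1) with ht
    refine ⟨by positivity, ?_⟩
    have h1 : IsCoprime (1 + t * b) t := ⟨1, -b, by ring⟩
    have h2 : IsCoprime (1 + t * b) c := ⟨1, -(c * ((n : ℤ) + 1) * b), by rw [ht]; ring⟩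
    obtain ⟨u, v, huv⟩ := h1.mul_right h2
    refine ⟨u • μ + v • ν, ?_⟩
    have key : B (A + t • ω) (u • μ + v • ν) = u * (1 + t * b) + v * (t * c) := by
      simp [hb, hc, hAμ, hAν, mul_comm]
      ring
    rw [key, huv]
end

section
/- Let L be a finitely generated free ℤ-module with a symmetric bilinear form B : L × L → ℤ. Let A ∈ L have divisibility 1, and let ω, W ∈ L satisfy B(A, W) ≠ 0, B(ω, W) = 0, and B(ω, ω) ≠ 0. Then there exist infinitely many positive integers t such that A + t·ω has divisibility 1. -/
/-- Combination of the two steps of the proof of Proposition 2.2: if `A` has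
divisibility 1, `B(A, W) ≠ 0`, `B(ω, W) = 0`, and `B(ω, ω) ≠ 0`, then there are
infinitely many positive integers `t` such that `A + t·ω` has divisibility 1. -/
theorem stmt_5 {L : Type*} [AddCommGroup L] [Module ℤ L]
    [Module.Free ℤ L] [Module.Finite ℤ L]
    (B : L →ₗ[ℤ] L →ₗ[ℤ] ℤ) (hBsymm : ∀ x y, B x y = B y x)
    (A ω W : L)
    (hAdiv : ∃ μ₀, B A μ₀ = 1)
    (hAW : B A W ≠ 0) (hωW : B ω W = 0) (hωω : B ω ω ≠ 0) :
    {t : ℤ | 0 < t ∧ ∃ x, B (A + t • ω) x = 1}.Infinite := by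
  obtain ⟨μ₀, hμ₀⟩ := hAdiv
  set ν : L := B A W • ω - B A ω • W with hν
  set c : ℤ := B ω μ₀ with hc
  set d : ℤ := B A W * B ω ω with hd
  have hAν : B A ν = 0 := by
    rw [hν]; simp; ring
  have hων : B ω ν = d := by
    rw [hν, hd]; simp [hωW]
  have hdne : d ≠ 0 := mul_ne_zero hAW hωω
  apply Set.infinite_of_injective_forall_mem
    (f := fun n : ℕ => ((n : ℤ) + 1) * d ^ 2)
  · intro a b hab
    have h2 : (d : ℤ) ^ 2 ≠ 0 := pow_ne_zero _ hdne
    have := mul_right_cancel₀ h2 hab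
    exact_mod_cast by linarith
  · intro n
    set t : ℤ := ((n : ℤ) + 1) * d ^ 2 with ht
    have htpos : 0 < t := by positivity
    refine ⟨htpos, ?_⟩
    have h1 : IsCoprime (1 + t * c) t := ⟨1, -c, by ring⟩
    have h2 : IsCoprime (1 + t * c) d :=
      ⟨1, -(((n : ℤ) + 1) * d * c), by rw [ht]; ring⟩
    obtain ⟨a, b, hab⟩ := h1.mul_right h2
    refine ⟨a • μ₀ + b • ν, ?_⟩
    have : B (A + t • ω) (a • μ₀ + b • ν)
        = a * (1 + t * c) + b * (t * d) := by
      simp [hμ₀, hAν, hων]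
      ring
    rw [this, hab]
end

section
/- Let n ≥ 2 and let g, t, d, e be positive integers. Set r = 16·g·t²·d⁴ and M = 1 + 4·g·t²·d⁴·(n − 1) + 16·g·t²·d²·e. Let k and s be integers such that k²·M = 16·t²·d⁴·s and such that gcd(r, gcd(|k|, |s|)) = 1. Then gcd(r, |k|) = 4·t·d². -/
/-! Write `a = 4td²`, so that `r = a · (4gtd²)`, the isotropy condition reads `k²M = a²s` and
`M = 1 + a · (gtd²(n - 1) + 4gte)` is coprime to `a`. Hence `a ∣ k`, say `k = ak'`, and then
`s = k'²M`; every common divisor of `4gtd²` and `k'` divides `r`, `k` and `s`, so primitivity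
forces `gcd(4gtd², k') = 1` and `gcd(r, k) = a · gcd(4gtd², k') = a`. -/

namespace Int

theorem dvd_of_sq_dvd_sq_mul_of_isCoprime {a k M : ℤ} (hM : IsCoprime a M)
    (h : a ^ 2 ∣ k ^ 2 * M) : a ∣ k :=
  (Int.pow_dvd_pow_iff two_ne_zero).mp (hM.pow_left.dvd_of_dvd_mul_right h)

theorem gcd_mul_eq_natAbs_of_sq_mul_eq_sq_mul {a b k s M : ℤ} (hM : IsCoprime a M)
    (hisot : k ^ 2 * M = a ^ 2 * s) (hprim : Int.gcd (a * b) (Int.gcd k s) = 1) :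
    Int.gcd (a * b) k = a.natAbs := by
  obtain ⟨k', rfl⟩ : a ∣ k := dvd_of_sq_dvd_sq_mul_of_isCoprime hM ⟨s, hisot⟩
  rcases eq_or_ne a 0 with rfl | ha
  · simp
  obtain rfl : s = k' ^ 2 * M :=
    (mul_left_cancel₀ (pow_ne_zero 2 ha) (by rw [← hisot]; ring)).symm
  have hb : IsCoprime b k' :=
    ((Int.isCoprime_iff_gcd_eq_one.mpr hprim).of_mul_left_right).of_isCoprime_of_dvd_right
      (Int.dvd_coe_gcd (dvd_mul_left k' a) ⟨k' * M, by ring⟩)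
  rw [Int.gcd_mul_left, Int.isCoprime_iff_gcd_eq_one.mp hb, mul_one]

end Int

theorem stmt_7_general (n g t d e : ℤ)
    (ht : 0 < t)
    (k s : ℤ)
    (hisot : k ^ 2 * (1 + 4 * g * t ^ 2 * d ^ 4 * (n - 1) + 16 * g * t ^ 2 * d ^ 2 * e)
      = 16 * t ^ 2 * d ^ 4 * s)
    (hprim : Int.gcd (16 * g * t ^ 2 * d ^ 4) (Int.gcd k s) = 1) :
    (Int.gcd (16 * g * t ^ 2 * d ^ 4) k : ℤ) = 4 * t * d ^ 2 := by
  have hM : IsCoprime (4 * t * d ^ 2)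
      (1 + 4 * g * t ^ 2 * d ^ 4 * (n - 1) + 16 * g * t ^ 2 * d ^ 2 * e) := by
    rw [show 1 + 4 * g * t ^ 2 * d ^ 4 * (n - 1) + 16 * g * t ^ 2 * d ^ 2 * e
        = 1 + 4 * t * d ^ 2 * (g * t * d ^ 2 * (n - 1) + 4 * g * t * e) by ring]
    exact isCoprime_one_right.add_mul_left_right _
  have hr : 16 * g * t ^ 2 * d ^ 4 = 4 * t * d ^ 2 * (4 * g * t * d ^ 2) := by ring
  rw [hr] at hprim ⊢
  rw [Int.gcd_mul_eq_natAbs_of_sq_mul_eq_sq_mul hM (by linear_combination hisot) hprim,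
    Int.natCast_natAbs, abs_of_nonneg (by positivity)]

/-- Arithmetic content of Proposition 2.3(b): for the isotropic primitive Mukai
vector `(r, kĤ, s)` with `r = 16gt²d⁴` and `Ĥ² = 2gM`, one has
`gcd(r, |k|) = 4td²`. -/
theorem stmt_7 (n g t d e : ℤ) (hn : 2 ≤ n)
    (hg : 0 < g) (ht : 0 < t) (hd : 0 < d) (he : 0 < e)
    (k s : ℤ)
    (hisot : k ^ 2 * (1 + 4 * g * t ^ 2 * d ^ 4 * (n - 1) + 16 * g * t ^ 2 * d ^ 2 * e)
      = 16 * t ^ 2 * d ^ 4 * s)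
    (hprim : Int.gcd (16 * g * t ^ 2 * d ^ 4) (Int.gcd k s) = 1) :
    (Int.gcd (16 * g * t ^ 2 * d ^ 4) k : ℤ) = 4 * t * d ^ 2 :=
  stmt_7_general n g t d e ht k s hisot hprim
end
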